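/- Completeness of the Boolean translation: if M = (⟨T,T⟩, τ) is a metric equilibrium model of a metric logic program P of length λ, then θ(M) is an equilibrium model of Π_λ(P) ∪ Δ_{λ,ν} ∪ Ψ_{λ,ν}(P), where ν = τ(λ−1). -/

import Mathlib

/-! ### Propositional Here-and-There -/

inductive HTForm (α : Type) : Type
  | bot : HTForm α
  | atom : α → HTForm α
  | and : HTForm α → HTForm α → HTForm α
  | or : HTForm α → HTForm α → HTForm α
  | imp : HTForm α → HTForm α → HTForm α

/-- HT satisfaction `⟨H,T⟩ ⊨ φ`. -/
def HTSat {α : Type} : Set α → Set α → HTForm α → Prop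
  | _, _, .bot => False
  | H, _, .atom a => a ∈ H
  | H, T, .and φ ψ => HTSat H T φ ∧ HTSat H T ψ
  | H, T, .or φ ψ => HTSat H T φ ∨ HTSat H T ψ
  | H, T, .imp φ ψ => (HTSat H T φ → HTSat H T ψ) ∧ (HTSat T T φ → HTSat T T ψ)

/-- Classical satisfaction. -/
def ClSat {α : Type} : Set α → HTForm α → Prop
  | _, .bot => False
  | T, .atom a => a ∈ T
  | T, .and φ ψ => ClSat T φ ∧ ClSat T ψ
  | T, .or φ ψ => ClSat T φ ∨ ClSat T ψ
  | T, .imp φ ψ => ClSat T φ → ClSat T ψ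

def HTModel {α : Type} (H T : Set α) (Γ : Set (HTForm α)) : Prop :=
  ∀ φ ∈ Γ, HTSat H T φ

/-- Equilibrium model: total HT-model minimal in the here-component. -/
def EqModel {α : Type} (T : Set α) (Γ : Set (HTForm α)) : Prop :=
  HTModel T T Γ ∧ ∀ H : Set α, H ⊆ T → HTModel H T Γ → H = T

def hneg {α : Type} (φ : HTForm α) : HTForm α := .imp φ .bot
def hTop {α : Type} : HTForm α := hneg .bot
def hconj {α : Type} (l : List (HTForm α)) : HTForm α := l.foldr .and hTop
def hdisj {α : Type} (l : List (HTForm α)) : HTForm α := l.foldr .or .bot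

/-! ### Timing functions -/

/-- A (strict) timing function wrt `lam`: `τ 0 = 0` and `τ` strictly increasing on `[0, lam)`. -/
def TimingFn (lam : ℕ) (τ : ℕ → ℕ) : Prop :=
  τ 0 = 0 ∧ ∀ k, k + 1 < lam → τ k < τ (k + 1)

/-! ### Metric formulas and MHT satisfaction -/

inductive MForm (α : Type) : Type
  | bot : MForm α
  | atom : α → MForm α
  | and : MForm α → MForm α → MForm α
  | or : MForm α → MForm α → MForm α
  | imp : MForm α → MForm α → MForm α
  | init : MForm α
  | next : ℕ → Option ℕ → MForm α → MForm α
  | always : ℕ → Option ℕ → MForm α → MForm α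
  | event : ℕ → Option ℕ → MForm α → MForm α

/-- Membership `d ∈ [m, n)` with `n ∈ ℕ ∪ {ω}` (`none` = ω). -/
def inI (m : ℕ) (n : Option ℕ) (d : ℕ) : Prop :=
  m ≤ d ∧ ∀ n', n = some n' → d < n'

/-- MHT satisfaction over a timed HT-trace of length `lam` given by `H T : ℕ → Set α` and `τ`. -/
def MSat {α : Type} (lam : ℕ) : (ℕ → Set α) → (ℕ → Set α) → (ℕ → ℕ) → ℕ → MForm α → Prop
  | _, _, _, _, .bot => False
  | H, _, _, k, .atom a => a ∈ H k
  | H, T, τ, k, .and φ ψ => MSat lam H T τ k φ ∧ MSat lam H T τ k ψ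
  | H, T, τ, k, .or φ ψ => MSat lam H T τ k φ ∨ MSat lam H T τ k ψ
  | H, T, τ, k, .imp φ ψ =>
      (MSat lam H T τ k φ → MSat lam H T τ k ψ) ∧
      (MSat lam T T τ k φ → MSat lam T T τ k ψ)
  | _, _, _, k, .init => k = 0
  | H, T, τ, k, .next m n φ =>
      k + 1 < lam ∧ MSat lam H T τ (k + 1) φ ∧ inI m n (τ (k + 1) - τ k)
  | H, T, τ, k, .event m n φ =>
      ∃ i, k ≤ i ∧ i < lam ∧ inI m n (τ i - τ k) ∧ MSat lam H T τ i φ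
  | H, T, τ, k, .always m n φ =>
      ∀ i, k ≤ i → i < lam → inI m n (τ i - τ k) → MSat lam H T τ i φ

def mneg {α : Type} (φ : MForm α) : MForm α := .imp φ .bot
def mTop {α : Type} : MForm α := mneg .bot
def mconj {α : Type} (l : List (MForm α)) : MForm α := l.foldr .and mTop
def mdisj {α : Type} (l : List (MForm α)) : MForm α := l.foldr .or .bot

/-! ### The Boolean timing program Δ_{λ,ν} -/

/-- `bigOr`/`deltaRule`/`DeltaB` over atoms embedded via `f : ℕ × ℕ → β`
(`f (k,d)` plays the role of the atom `t_{k,d}`). -/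
def deltaRule {β : Type} (f : ℕ × ℕ → β) (k d ν : ℕ) : HTForm β :=
  .imp (.atom (f (k, d)))
    (hdisj (((List.range (ν + 1)).filter (fun d' => decide (d < d'))).map
      (fun d' => .atom (f (k + 1, d')))))

def DeltaB {β : Type} (f : ℕ × ℕ → β) (lam ν : ℕ) : Set (HTForm β) :=
  {HTForm.atom (f (0, 0))} ∪
  {r | ∃ k d, k + 1 < lam ∧ d ≤ ν ∧ r = deltaRule f k d ν}

/-- `⟨H,T⟩` is timed wrt `lam` with timing function `τ`:
`t_{k,d} ∈ H ↔ τ k = d` and `t_{k,d} ∈ T ↔ τ k = d` for all `k < lam`. -/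
def TimedHT {β : Type} (f : ℕ × ℕ → β) (lam : ℕ) (H T : Set β) (τ : ℕ → ℕ) : Prop :=
  TimingFn lam τ ∧
  ∀ k, k < lam → ∀ d, ((f (k, d) ∈ H) ↔ τ k = d) ∧ ((f (k, d) ∈ T) ↔ τ k = d)

/-! ### HT_c with difference constraints (simple signature) -/

abbrev CVal (V : Type) := V → Option ℕ

def CValLe {V : Type} (h t : CVal V) : Prop := ∀ x d, h x = some d → t x = some d

inductive CForm (V : Type) : Type
  | bot : CForm V
  | eqC : V → ℕ → CForm V
  | diff : V → V → ℤ → CForm V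
  | and : CForm V → CForm V → CForm V
  | or : CForm V → CForm V → CForm V
  | imp : CForm V → CForm V → CForm V

def CSat {V : Type} : CVal V → CVal V → CForm V → Prop
  | _, _, .bot => False
  | h, _, .eqC x d => h x = some d
  | h, _, .diff x y d => ∃ a b : ℕ, h x = some a ∧ h y = some b ∧ (a : ℤ) - b ≤ d
  | h, t, .and φ ψ => CSat h t φ ∧ CSat h t ψ
  | h, t, .or φ ψ => CSat h t φ ∨ CSat h t ψ
  | h, t, .imp φ ψ => (CSat h t φ → CSat h t ψ) ∧ (CSat t t φ → CSat t t ψ)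

def CModel {V : Type} (h t : CVal V) (Γ : Set (CForm V)) : Prop := ∀ φ ∈ Γ, CSat h t φ

/-- Δ^c_λ over integer variables `t_0, …, t_{λ-1}` (variables are indices in ℕ). -/
def DeltaC (lam : ℕ) : Set (CForm ℕ) :=
  {CForm.eqC 0 0} ∪ {r | ∃ k, k + 1 < lam ∧ r = CForm.diff k (k + 1) (-1)}

/-- `⟨h,t⟩` is timed wrt `lam`. -/
def TimedC (lam : ℕ) (h t : CVal ℕ) : Prop :=
  ∃ τ : ℕ → ℕ, TimingFn lam τ ∧ ∀ k, k < lam → h k = some (τ k) ∧ t k = some (τ k)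

/-! ### Timed traces and the bijection θ/σ -/

abbrev TAtom (α : Type) := (α × ℕ) ⊕ (ℕ × ℕ)

/-- A trace candidate: here-states, there-states and a timing function. -/
abbrev TraceC (α : Type) := (ℕ → Set α) × (ℕ → Set α) × (ℕ → ℕ)

/-- Timed HT-trace of length `lam` (normalized beyond `lam`). -/
def IsTTrace {α : Type} (lam : ℕ) (M : TraceC α) : Prop :=
  (∀ k, M.1 k ⊆ M.2.1 k) ∧ TimingFn lam M.2.2 ∧
  (∀ k, lam ≤ k → M.1 k = ∅ ∧ M.2.1 k = ∅ ∧ M.2.2 k = 0)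

def thetaMap {α : Type} (lam : ℕ) (M : TraceC α) : Set (TAtom α) × Set (TAtom α) :=
  ({x | (∃ a k, k < lam ∧ a ∈ M.1 k ∧ x = Sum.inl (a, k)) ∨
        (∃ k, k < lam ∧ x = Sum.inr (k, M.2.2 k))},
   {x | (∃ a k, k < lam ∧ a ∈ M.2.1 k ∧ x = Sum.inl (a, k)) ∨
        (∃ k, k < lam ∧ x = Sum.inr (k, M.2.2 k))})

/-- HT-interpretations over `A* ∪ T` timed wrt `lam`. -/
def TimedInterp (α : Type) (lam : ℕ) : Set (Set (TAtom α) × Set (TAtom α)) :=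
  {p | p.1 ⊆ p.2 ∧ (∀ a k, Sum.inl (a, k) ∈ p.2 → k < lam) ∧
    ∃ τ : ℕ → ℕ, TimingFn lam τ ∧
      ∀ k d, (Sum.inr (k, d) ∈ p.1 ↔ (k < lam ∧ τ k = d)) ∧
             (Sum.inr (k, d) ∈ p.2 ↔ (k < lam ∧ τ k = d))}

def sigmaMap {α : Type} (lam : ℕ) (p : Set (TAtom α) × Set (TAtom α)) (τ : ℕ → ℕ) :
    TraceC α :=
  (fun k => {a | Sum.inl (a, k) ∈ p.1},
   fun k => {a | Sum.inl (a, k) ∈ p.2},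
   fun k => if k < lam then τ k else 0)

/-! ### Metric logic programs and the translation Π_λ -/

inductive BAtom (α : Type) : Type
  | atom : α → BAtom α
  | initB : BAtom α
  | finB : BAtom α

/-- A metric rule: either `□(α ← β)` or `□(○_[m,n) a ← β)`. -/
inductive MRule (α : Type) : Type
  | std : List α → List α → List (BAtom α) → List (BAtom α) → MRule α
  | nxt : ℕ → Option ℕ → α → List (BAtom α) → List (BAtom α) → MRule α

def bToM {α : Type} : BAtom α → MForm α
  | .atom a => .atom a
  | .initB => .init
  | .finB => mneg (.next 0 none mTop)

/-- The rule body as a metric formula. -/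
def MRule.mbody {α : Type} : MRule α → MForm α
  | .std _ _ bp bn =>
      .and (mconj (bp.map bToM)) (mconj (bn.map (fun b => mneg (bToM b))))
  | .nxt _ _ _ bp bn =>
      .and (mconj (bp.map bToM)) (mconj (bn.map (fun b => mneg (bToM b))))

/-- The rule (without the leading `□`) as a metric formula. -/
def MRule.toMForm {α : Type} : MRule α → MForm α
  | .std hp hn bp bn =>
      .imp (MRule.mbody (.std hp hn bp bn))
        (mdisj (hp.map MForm.atom ++ hn.map (fun a => mneg (MForm.atom a))))
  | .nxt m n a bp bn =>
      .imp (MRule.mbody (.nxt m n a bp bn)) (.next m n (.atom a))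

/-- `(H,T,τ)` is an MHT-model (of length `lam`) of program `P`. -/
def MHTModelP {α : Type} (lam : ℕ) (H T : ℕ → Set α) (τ : ℕ → ℕ)
    (P : Set (MRule α)) : Prop :=
  ∀ r ∈ P, ∀ k, k < lam → MSat lam H T τ k r.toMForm

/-- Metric equilibrium model `(⟨T,T⟩, τ)` of `P`. -/
def MetricEq {α : Type} (lam : ℕ) (T : ℕ → Set α) (τ : ℕ → ℕ)
    (P : Set (MRule α)) : Prop :=
  MHTModelP lam T T τ P ∧
  ∀ H : ℕ → Set α, (∀ k, H k ⊆ T k) → MHTModelP lam H T τ P → ∀ k, k < lam → H k = T k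

/-- Translation of body atoms at step `k`, with atoms embedded via `g : α × ℕ → β`. -/
def trB {α β : Type} (g : α × ℕ → β) (lam k : ℕ) : BAtom α → HTForm β
  | .atom a => .atom (g (a, k))
  | .initB => if k = 0 then hTop else .bot
  | .finB => if k = lam - 1 then hTop else .bot

def trBody {α β : Type} (g : α × ℕ → β) (lam k : ℕ) : MRule α → HTForm β
  | .std _ _ bp bn =>
      .and (hconj (bp.map (trB g lam k)))
           (hconj (bn.map (fun b => hneg (trB g lam k b))))
  | .nxt _ _ _ bp bn =>
      .and (hconj (bp.map (trB g lam k)))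
           (hconj (bn.map (fun b => hneg (trB g lam k b))))

/-- Translation `t_k(r)` of a metric rule at step `k`. -/
def trRule {α β : Type} (g : α × ℕ → β) (lam k : ℕ) : MRule α → HTForm β
  | .std hp hn bp bn =>
      .imp (trBody g lam k (.std hp hn bp bn))
        (hdisj (hp.map (fun a => HTForm.atom (g (a, k))) ++
                hn.map (fun a => hneg (HTForm.atom (g (a, k))))))
  | .nxt m n a bp bn =>
      .imp (trBody g lam k (.nxt m n a bp bn))
        (if k = lam - 1 then .bot else .atom (g (a, k + 1)))

/-- `Π_λ(P)`. -/
def PiT {α β : Type} (g : α × ℕ → β) (lam : ℕ) (P : Set (MRule α)) : Set (HTForm β) :=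
  {φ | ∃ r ∈ P, ∃ k, k < lam ∧ φ = trRule g lam k r}

/-! ### The Boolean constraint part Ψ_{λ,ν}(P) -/

def PsiB {α : Type} (lam ν : ℕ) (P : Set (MRule α)) : Set (HTForm (TAtom α)) :=
  {φ | ∃ m n a bp bn, MRule.nxt m n a bp bn ∈ P ∧
    ∃ k d d', k + 1 < lam ∧ d < d' ∧ d' ≤ ν ∧
      φ = .imp (.and (trBody Sum.inl lam k (.nxt m n a bp bn))
                 (.and (.atom (Sum.inr (k, d))) (.atom (Sum.inr (k + 1, d'))))) .bot ∧
      (d' - d < m ∨ ∃ n', n = some n' ∧ n' ≤ d' - d)}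

/-- θ on total timed traces, producing one set over `A* ∪ T`. -/
def thetaTot {α : Type} (lam : ℕ) (T : ℕ → Set α) (τ : ℕ → ℕ) : Set (TAtom α) :=
  {x | (∃ a k, k < lam ∧ a ∈ T k ∧ x = Sum.inl (a, k)) ∨
       (∃ k, k < lam ∧ x = Sum.inr (k, τ k))}

/-! ### HT_c over the mixed signature (Boolean atoms + integer timing variables) -/

inductive CForm2 (α : Type) : Type
  | bot : CForm2 α
  | batom : α × ℕ → CForm2 α
  | eqC : ℕ → ℕ → CForm2 α
  | diff : ℕ → ℕ → ℤ → CForm2 α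
  | and : CForm2 α → CForm2 α → CForm2 α
  | or : CForm2 α → CForm2 α → CForm2 α
  | imp : CForm2 α → CForm2 α → CForm2 α

/-- A valuation: Boolean part (atoms assigned `true`) and integer part. -/
abbrev CVal2 (α : Type) := Set (α × ℕ) × (ℕ → Option ℕ)

def CVal2Le {α : Type} (h t : CVal2 α) : Prop :=
  h.1 ⊆ t.1 ∧ ∀ x d, h.2 x = some d → t.2 x = some d

def CSat2 {α : Type} : CVal2 α → CVal2 α → CForm2 α → Prop
  | _, _, .bot => False
  | h, _, .batom p => p ∈ h.1
  | h, _, .eqC x d => h.2 x = some d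
  | h, _, .diff x y d => ∃ a b : ℕ, h.2 x = some a ∧ h.2 y = some b ∧ (a : ℤ) - b ≤ d
  | h, t, .and φ ψ => CSat2 h t φ ∧ CSat2 h t ψ
  | h, t, .or φ ψ => CSat2 h t φ ∨ CSat2 h t ψ
  | h, t, .imp φ ψ => (CSat2 h t φ → CSat2 h t ψ) ∧ (CSat2 t t φ → CSat2 t t ψ)

def CModel2 {α : Type} (h t : CVal2 α) (Γ : Set (CForm2 α)) : Prop :=
  ∀ φ ∈ Γ, CSat2 h t φ

/-- Constraint equilibrium model. -/
def CEqModel {α : Type} (t : CVal2 α) (Γ : Set (CForm2 α)) : Prop :=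
  CModel2 t t Γ ∧ ∀ h : CVal2 α, CVal2Le h t → CModel2 h t Γ → h = t

def cneg {α : Type} (φ : CForm2 α) : CForm2 α := .imp φ .bot

/-- Conversion of Boolean HT formulas over `α × ℕ` into mixed constraint formulas. -/
def toC2 {α : Type} : HTForm (α × ℕ) → CForm2 α
  | .bot => .bot
  | .atom p => .batom p
  | .and φ ψ => .and (toC2 φ) (toC2 ψ)
  | .or φ ψ => .or (toC2 φ) (toC2 ψ)
  | .imp φ ψ => .imp (toC2 φ) (toC2 ψ)

def PiC {α : Type} (lam : ℕ) (P : Set (MRule α)) : Set (CForm2 α) :=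
  toC2 '' PiT id lam P

def DeltaC2 {α : Type} (lam : ℕ) : Set (CForm2 α) :=
  {CForm2.eqC 0 0} ∪ {r | ∃ k, k + 1 < lam ∧ r = CForm2.diff k (k + 1) (-1)}

def PsiC {α : Type} (lam : ℕ) (P : Set (MRule α)) : Set (CForm2 α) :=
  {φ | ∃ m n a bp bn, MRule.nxt m n a bp bn ∈ P ∧ ∃ k, k + 1 < lam ∧
    (φ = .imp (.and (toC2 (trBody id lam k (.nxt m n a bp bn)))
               (cneg (.diff k (k + 1) (-(m : ℤ))))) .bot ∨
     ∃ n', n = some n' ∧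
       φ = .imp (.and (toC2 (trBody id lam k (.nxt m n a bp bn)))
                 (cneg (.diff (k + 1) k ((n' : ℤ) - 1)))) .bot)}

/-- θ^c on total timed traces. -/
def thetaC {α : Type} (lam : ℕ) (T : ℕ → Set α) (τ : ℕ → ℕ) : CVal2 α :=
  ({p | p.2 < lam ∧ p.1 ∈ T p.2}, fun k => if k < lam then some (τ k) else none)

/-!
The translation of a rule at step `k` holds in `⟨H, G⟩` exactly when the rule holds at step `k`
of the trace whose states are read off the Boolean atoms of `H` and `G`, except that the interval
`[m, n)` of a next-rule is not translated: `Ψ` rules out the consecutive timing atoms violating it.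
Hence `θ(M)` is a model, `Δ` holding because `τ` is strictly increasing and bounded by `ν`.
If `⟨H, θ(M)⟩` is a model with `H ⊆ θ(M)`, then `H` contains every `t_{k,τ(k)}` (induction along
`Δ`), and the Boolean atoms of `H` form an MHT-model `⟨H', T⟩` of `P`, the intervals being
inherited from the total model; metric equilibrium forces `H' = T`, so `H = θ(M)`.
-/

section HereThere

variable {β : Type} {H T : Set β}

theorem HTSat.to_there (hHT : H ⊆ T) {φ : HTForm β} (h : HTSat H T φ) : HTSat T T φ := by
  induction φ with
  | bot => exact h
  | atom a => exact hHT h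
  | and φ ψ ihφ ihψ => exact ⟨ihφ h.1, ihψ h.2⟩
  | or φ ψ ihφ ihψ => exact h.imp ihφ ihψ
  | imp φ ψ _ _ => exact ⟨h.2, h.2⟩

theorem htSat_hconj (l : List (HTForm β)) : HTSat H T (hconj l) ↔ ∀ φ ∈ l, HTSat H T φ := by
  induction l with
  | nil => simp [hconj, hTop, hneg, HTSat]
  | cons φ l ih => simp [hconj, HTSat, ← ih]

theorem htSat_hdisj (l : List (HTForm β)) : HTSat H T (hdisj l) ↔ ∃ φ ∈ l, HTSat H T φ := by
  induction l with
  | nil => simp [hdisj, HTSat]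
  | cons φ l ih => simp [hdisj, HTSat, ← ih]

theorem htModel_union {Γ Δ : Set (HTForm β)} :
    HTModel H T (Γ ∪ Δ) ↔ HTModel H T Γ ∧ HTModel H T Δ :=
  forall₂_or_left

end HereThere

section MetricHereThere

variable {α : Type} {lam k : ℕ} {H T : ℕ → Set α} {τ : ℕ → ℕ}

theorem mSat_mconj (l : List (MForm α)) :
    MSat lam H T τ k (mconj l) ↔ ∀ φ ∈ l, MSat lam H T τ k φ := by
  induction l with
  | nil => simp [mconj, mTop, mneg, MSat]
  | cons φ l ih => simp [mconj, MSat, ← ih]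

theorem mSat_mdisj (l : List (MForm α)) :
    MSat lam H T τ k (mdisj l) ↔ ∃ φ ∈ l, MSat lam H T τ k φ := by
  induction l with
  | nil => simp [mdisj, MSat]
  | cons φ l ih => simp [mdisj, MSat, ← ih]

theorem TimingFn.le_of_le (h : TimingFn lam τ) {i j : ℕ} (hij : i ≤ j) (hj : j < lam) :
    τ i ≤ τ j := by
  induction j, hij using Nat.le_induction with
  | base => exact le_rfl
  | succ j _ ih => exact (ih (by omega)).trans (h.2 j hj).le

end MetricHereThere

section Translation

variable {α : Type} {lam k : ℕ} {τ : ℕ → ℕ} {H G : Set (TAtom α)} {Hs Ts : ℕ → Set α}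

def EncodesStates (lam : ℕ) (H : Set (TAtom α)) (Hs : ℕ → Set α) : Prop :=
  ∀ k < lam, ∀ a, Sum.inl (a, k) ∈ H ↔ a ∈ Hs k

theorem encodesStates_stateOf (H : Set (TAtom α)) :
    EncodesStates lam H (fun k => {a | Sum.inl (a, k) ∈ H}) :=
  fun _ _ _ => Iff.rfl

@[simp]
theorem inl_mem_thetaTot {T : ℕ → Set α} {a : α} :
    Sum.inl (a, k) ∈ thetaTot lam T τ ↔ k < lam ∧ a ∈ T k := by
  simp [thetaTot]

@[simp]
theorem inr_mem_thetaTot {T : ℕ → Set α} {d : ℕ} :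
    Sum.inr (k, d) ∈ thetaTot lam T τ ↔ k < lam ∧ τ k = d := by
  simp [thetaTot, eq_comm]

theorem encodesStates_thetaTot {T : ℕ → Set α} : EncodesStates lam (thetaTot lam T τ) T := by
  intro k hk a
  simp [hk]

theorem htSat_trB_iff (hk : k < lam) (hH : EncodesStates lam H Hs) (b : BAtom α) :
    HTSat H G (trB Sum.inl lam k b) ↔ MSat lam Hs Ts τ k (bToM b) := by
  cases b with
  | atom a => exact hH k hk a
  | initB => by_cases h0 : k = 0 <;> simp [trB, bToM, HTSat, MSat, h0, hTop, hneg]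
  | finB =>
    by_cases h : k = lam - 1 <;> simp [trB, bToM, HTSat, MSat, mneg, mTop, inI, h, hTop, hneg] <;>
      omega

theorem htSat_trBody_iff (hk : k < lam) (hH : EncodesStates lam H Hs)
    (hG : EncodesStates lam G Ts) (r : MRule α) :
    HTSat H G (trBody Sum.inl lam k r) ↔ MSat lam Hs Ts τ k r.mbody := by
  have hHb : ∀ b, HTSat H G (trB Sum.inl lam k b) ↔ MSat lam Hs Ts τ k (bToM b) :=
    htSat_trB_iff hk hH
  have hGb : ∀ b, HTSat G G (trB Sum.inl lam k b) ↔ MSat lam Ts Ts τ k (bToM b) :=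
    htSat_trB_iff hk hG
  cases r <;>
    simp only [trBody, MRule.mbody, hneg, mneg, HTSat, MSat, htSat_hconj, mSat_mconj,
      List.forall_mem_map, hHb, hGb]

theorem htSat_trHead_iff (hk : k < lam) (hH : EncodesStates lam H Hs)
    (hG : EncodesStates lam G Ts) (hp hn : List α) :
    HTSat H G (hdisj (hp.map (fun a => HTForm.atom (Sum.inl (a, k))) ++
        hn.map (fun a => hneg (HTForm.atom (Sum.inl (a, k)))))) ↔
      MSat lam Hs Ts τ k (mdisj (hp.map MForm.atom ++ hn.map (fun a => mneg (MForm.atom a)))) := by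
  simp only [htSat_hdisj, mSat_mdisj, List.mem_append, List.mem_map, or_and_right, exists_or,
    exists_exists_and_eq_and, hneg, mneg, HTSat, MSat, hH k hk, hG k hk]

theorem htSat_trNextHead_iff (hk : k < lam) (hH : EncodesStates lam H Hs) (a : α) :
    HTSat H G (if k = lam - 1 then .bot else .atom (Sum.inl (a, k + 1))) ↔
      k + 1 < lam ∧ a ∈ Hs (k + 1) := by
  split_ifs with h
  · simp only [HTSat, false_iff, not_and]
    omega
  · have hk' : k + 1 < lam := by omega
    simp only [HTSat, hH (k + 1) hk', hk', true_and]

theorem htSat_trRule_std_iff (hk : k < lam) (hH : EncodesStates lam H Hs)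
    (hG : EncodesStates lam G Ts) (hp hn : List α) (bp bn : List (BAtom α)) :
    HTSat H G (trRule Sum.inl lam k (.std hp hn bp bn)) ↔
      MSat lam Hs Ts τ k (MRule.std hp hn bp bn).toMForm := by
  simp only [trRule, MRule.toMForm, HTSat, MSat, htSat_trBody_iff (τ := τ) hk hH hG,
    htSat_trBody_iff (τ := τ) hk hG hG, htSat_trHead_iff (τ := τ) hk hH hG,
    htSat_trHead_iff (τ := τ) hk hG hG]

theorem htSat_trRule_of_mSat (hk : k < lam) (hH : EncodesStates lam H Hs)
    (hG : EncodesStates lam G Ts) {r : MRule α} (h : MSat lam Hs Ts τ k r.toMForm) :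
    HTSat H G (trRule Sum.inl lam k r) := by
  cases r with
  | std hp hn bp bn => exact (htSat_trRule_std_iff hk hH hG hp hn bp bn).mpr h
  | nxt m n a bp bn =>
    simp only [trRule, MRule.toMForm, HTSat, MSat, htSat_trBody_iff (τ := τ) hk hH hG,
      htSat_trBody_iff (τ := τ) hk hG hG, htSat_trNextHead_iff hk hH,
      htSat_trNextHead_iff hk hG] at h ⊢
    exact ⟨fun hb => (h.1 hb).imp_right And.left, fun hb => (h.2 hb).imp_right And.left⟩

/-- The interval of a next-rule is not part of its translation; it is read off the total model. -/
theorem mSat_toMForm_of_htSat_trRule (hk : k < lam) (hH : EncodesStates lam H Hs)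
    (hG : EncodesStates lam G Ts) (hHG : H ⊆ G) {r : MRule α}
    (h : HTSat H G (trRule Sum.inl lam k r)) (hT : MSat lam Ts Ts τ k r.toMForm) :
    MSat lam Hs Ts τ k r.toMForm := by
  cases r with
  | std hp hn bp bn => exact (htSat_trRule_std_iff hk hH hG hp hn bp bn).mp h
  | nxt m n a bp bn =>
    refine ⟨fun hb => ?_, hT.2⟩
    have hbH := (htSat_trBody_iff hk hH hG _).mpr hb
    have hbT := (htSat_trBody_iff (τ := τ) hk hG hG _).mp (hbH.to_there hHG)
    obtain ⟨hk', ha⟩ := (htSat_trNextHead_iff hk hH a).mp (h.1 hbH)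
    exact ⟨hk', ha, (hT.1 hbT).2.2⟩

theorem htModel_piT_of_mhtModel {P : Set (MRule α)} (hH : EncodesStates lam H Hs)
    (hG : EncodesStates lam G Ts) (h : MHTModelP lam Hs Ts τ P) :
    HTModel H G (PiT Sum.inl lam P) := by
  rintro _ ⟨r, hr, k, hk, rfl⟩
  exact htSat_trRule_of_mSat hk hH hG (h r hr k hk)

theorem mhtModel_of_htModel_piT {P : Set (MRule α)} (hH : EncodesStates lam H Hs)
    (hG : EncodesStates lam G Ts) (hHG : H ⊆ G) (h : HTModel H G (PiT Sum.inl lam P))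
    (hT : MHTModelP lam Ts Ts τ P) : MHTModelP lam Hs Ts τ P :=
  fun r hr k hk =>
    mSat_toMForm_of_htSat_trRule hk hH hG hHG (h _ ⟨r, hr, k, hk, rfl⟩) (hT r hr k hk)

end Translation
section Timing

variable {α : Type} {lam ν : ℕ} {τ : ℕ → ℕ} {T : ℕ → Set α}

theorem htModel_thetaTot_deltaB (hlam : 0 < lam) (hτ : TimingFn lam τ)
    (hν : τ (lam - 1) ≤ ν) :
    HTModel (thetaTot lam T τ) (thetaTot lam T τ) (DeltaB Sum.inr lam ν) := by
  rintro _ (rfl | ⟨k, d, hk, -, rfl⟩)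
  · simpa only [HTSat, inr_mem_thetaTot] using ⟨hlam, hτ.1⟩
  · simp only [deltaRule, HTSat, htSat_hdisj, List.mem_map, List.mem_filter, List.mem_range,
      exists_exists_and_eq_and, inr_mem_thetaTot, decide_eq_true_eq, and_self]
    rintro ⟨-, rfl⟩
    exact ⟨τ (k + 1), ⟨by have := hτ.le_of_le (by omega : k + 1 ≤ lam - 1) (by omega); omega,
      hτ.2 k hk⟩, hk, rfl⟩

theorem htModel_thetaTot_psiB {P : Set (MRule α)} (h : MHTModelP lam T T τ P) :
    HTModel (thetaTot lam T τ) (thetaTot lam T τ) (PsiB lam ν P) := by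
  rintro _ ⟨m, n, a, bp, bn, hr, k, d, d', hk, -, -, rfl, hbad⟩
  simp only [HTSat, and_self, inr_mem_thetaTot]
  rintro ⟨hb, ⟨-, rfl⟩, -, rfl⟩
  have hbody := (htSat_trBody_iff (τ := τ) (by omega) encodesStates_thetaTot
    encodesStates_thetaTot _).mp hb
  obtain ⟨-, -, hm, hn⟩ := (h _ hr k (by omega)).1 hbody
  rcases hbad with hlt | ⟨n', rfl, hle⟩
  · omega
  · exact absurd (hn n' rfl) (by omega)

/-- As `H ⊆ θ(M)`, the only disjunct of a `Δ`-rule that `H` can satisfy is `t_{k+1,τ(k+1)}`. -/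
theorem inr_mem_of_htModel_deltaB {H : Set (TAtom α)} (hH : H ⊆ thetaTot lam T τ)
    (h : HTModel H (thetaTot lam T τ) (DeltaB Sum.inr lam ν)) (hτ : TimingFn lam τ)
    (hν : τ (lam - 1) ≤ ν) : ∀ k < lam, Sum.inr (k, τ k) ∈ H := by
  intro k hk
  induction k with
  | zero => simpa only [HTSat, hτ.1] using h _ (Or.inl rfl)
  | succ k ih =>
    have hτk : τ k ≤ ν := (hτ.le_of_le (by omega) (by omega)).trans hν
    have hrule := (h _ (Or.inr ⟨k, τ k, hk, hτk, rfl⟩)).1 (ih (by omega))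
    obtain ⟨_, hmem, hd⟩ := (htSat_hdisj _).mp hrule
    obtain ⟨d', -, rfl⟩ := List.mem_map.mp hmem
    obtain ⟨-, rfl⟩ := inr_mem_thetaTot.mp (hH hd)
    exact hd

theorem eq_thetaTot_of_subset {H : Set (TAtom α)} (hH : H ⊆ thetaTot lam T τ)
    (hstates : ∀ k < lam, {a | Sum.inl (a, k) ∈ H} = T k)
    (htimes : ∀ k < lam, Sum.inr (k, τ k) ∈ H) : H = thetaTot lam T τ := by
  refine hH.antisymm ?_
  rintro _ (⟨a, k, hk, ha, rfl⟩ | ⟨k, hk, rfl⟩)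
  · rw [← hstates k hk] at ha
    exact ha
  · exact htimes k hk

end Timing

/-- Theorem 1 (Completeness of the Boolean translation). -/
theorem boolean_translation_complete {α : Type} (lam ν : ℕ) (hlam : 1 ≤ lam)
    (P : Set (MRule α)) (T : ℕ → Set α) (τ : ℕ → ℕ)
    (hτ : TimingFn lam τ) (hν : ν = τ (lam - 1))
    (hme : MetricEq lam T τ P) :
    EqModel (thetaTot lam T τ)
      (PiT Sum.inl lam P ∪ DeltaB Sum.inr lam ν ∪ PsiB lam ν P) := by
  have hΘ : EncodesStates lam (thetaTot lam T τ) T := encodesStates_thetaTot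
  have hτν : τ (lam - 1) ≤ ν := hν.ge
  refine ⟨?_, fun H hH hmodel => ?_⟩
  · exact htModel_union.mpr ⟨htModel_union.mpr ⟨htModel_piT_of_mhtModel hΘ hΘ hme.1,
      htModel_thetaTot_deltaB hlam hτ hτν⟩, htModel_thetaTot_psiB hme.1⟩
  · obtain ⟨⟨hPi, hDelta⟩, -⟩ := htModel_union.mp hmodel |>.imp_left htModel_union.mp
    have hstates := hme.2 _ (fun k a ha => (inl_mem_thetaTot.mp (hH ha)).2)
      (mhtModel_of_htModel_piT (encodesStates_stateOf H) hΘ hH hPi hme.1)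
    exact eq_thetaTot_of_subset hH hstates (inr_mem_of_htModel_deltaB hH hDelta hτ hτν)
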